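/- arXiv:0910.2511 — 3 statements merged into one kernel-verified Lean document; each statement's English description precedes it below -/
import Mathlib

section
/- Let λ ≥ 0 and let u be a complex-valued function that is continuous on the closed unit disc {z ∈ ℂ : |z| ≤ 1} and holomorphic on the open unit disc, with u(0) = 1 and |u(z)| ≤ e^λ for all |z| ≤ 1. Then for any real numbers 0 < r < R < 1, the number of zeros of u in the open disc {|z| < r}, counted with multiplicity, is at most λ / log(R/r). -/
/-!
Jensen's inequality (`AnalyticOnNhd.sum_divisor_le`): if `‖u‖ ≤ M` on the circle of radius `R`,
the zeros of `u` in the closed disc of radius `r`, counted by the divisor, number at most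
`log (M / ‖u 0‖) / log (R / r)`; here `M = exp λ` and `u 0 = 1`. As `u 0 ≠ 0`, `u` has finite
order at every point of the disc, so all its zeros there lie in the finite support of the divisor,
which at such points is the multiplicity.
-/

open Metric
open scoped Classical

/-- The order of vanishing of `u` at `z` (as a natural number), defined to be the
`AnalyticAt.order` when `u` is analytic at `z` and finite, and junk value `0` otherwise. -/
noncomputable def zeroMultiplicity (u : ℂ → ℂ) (z : ℂ) : ℕ :=
  if h : AnalyticAt ℂ u z then (analyticOrderAt u z).toNat else 0

open MeromorphicOn Function

lemma zeroMultiplicity_eq_analyticOrderNatAt (u : ℂ → ℂ) (z : ℂ) :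
    zeroMultiplicity u z = analyticOrderNatAt u z := by
  unfold zeroMultiplicity analyticOrderNatAt
  split_ifs with h
  · rfl
  · simp [analyticOrderAt, h]

lemma Finset.sum_le_finsum_of_nonneg {α M : Type*} [AddCommMonoid M] [PartialOrder M]
    [IsOrderedAddMonoid M] {f : α → M} (s : Finset α) (hf : f.support.Finite)
    (hs : ↑s ⊆ f.support) (h0 : ∀ i, 0 ≤ f i) : ∑ i ∈ s, f i ≤ ∑ᶠ i, f i := by
  rw [finsum_eq_sum f hf]
  exact Finset.sum_le_sum_of_subset_of_nonneg (by simpa using hs) fun i _ _ ↦ h0 i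

section divisor

variable {𝕜 E : Type*} [NontriviallyNormedField 𝕜] [NormedAddCommGroup E] [NormedSpace 𝕜 E]
  {f : 𝕜 → E} {U : Set 𝕜} {x z : 𝕜}

lemma AnalyticOnNhd.divisor_eq_analyticOrderNatAt (hf : AnalyticOnNhd 𝕜 f U) (hz : z ∈ U) :
    divisor f U z = analyticOrderNatAt f z := by
  rw [hf.divisor_apply hz]
  cases h : analyticOrderAt f z <;> simp [analyticOrderNatAt, h]

lemma AnalyticOnNhd.mem_support_divisor (hf : AnalyticOnNhd 𝕜 f U) (hU : IsPreconnected U)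
    (hx : x ∈ U) (hfx : f x ≠ 0) (hz : z ∈ U) (hfz : f z = 0) :
    z ∈ (divisor f U).support := by
  have hfin : analyticOrderAt f z ≠ ⊤ :=
    hf.analyticOrderAt_ne_top_of_isPreconnected hU hx hz
      (by simp [(hf x hx).analyticOrderAt_eq_zero.mpr hfx])
  have hpos : analyticOrderAt f z ≠ 0 := (hf z hz).analyticOrderAt_ne_zero.mpr hfz
  rw [mem_support, hf.divisor_eq_analyticOrderNatAt hz, Nat.cast_ne_zero, analyticOrderNatAt]
  exact fun h ↦ (ENat.toNat_eq_zero.mp h).elim hpos hfin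

end divisor

lemma AnalyticOnNhd.sum_zeroMultiplicity_le_finsum_divisor {u : ℂ → ℂ} {U : Set ℂ}
    (hu : AnalyticOnNhd ℂ u U) (hU : IsCompact U) {s : Finset ℂ}
    (hs : ↑s ⊆ (divisor u U).support) :
    ∑ z ∈ s, (zeroMultiplicity u z : ℤ) ≤ ∑ᶠ z, divisor u U z := calc
  _ = ∑ z ∈ s, divisor u U z := by
    refine Finset.sum_congr rfl fun z hz ↦ ?_
    rw [hu.divisor_eq_analyticOrderNatAt ((divisor u U).supportWithinDomain (hs hz)),
      zeroMultiplicity_eq_analyticOrderNatAt]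
  _ ≤ _ := Finset.sum_le_finsum_of_nonneg s ((divisor u U).finiteSupport hU) hs hu.divisor_nonneg

theorem count_zeros_le_of_bounded_general (lam : ℝ) (hlam : 0 ≤ lam) (u : ℂ → ℂ)
    (hhol : DifferentiableOn ℂ u (ball (0 : ℂ) 1))
    (hu0 : u 0 = 1)
    (hbd : ∀ z ∈ closedBall (0 : ℂ) 1, ‖u z‖ ≤ Real.exp lam)
    (r R : ℝ) (hr : 0 < r) (hrR : r < R) (hR : R < 1) :
    ∃ hfin : {z : ℂ | ‖z‖ < r ∧ u z = 0}.Finite,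
      ((∑ z ∈ hfin.toFinset, zeroMultiplicity u z : ℕ) : ℝ) ≤ lam / Real.log (R / r) := by
  have habsR : |R| = R := abs_of_pos (hr.trans hrR)
  have hanR : AnalyticOnNhd ℂ u (closedBall 0 |R|) := by
    rw [habsR]
    exact (hhol.analyticOnNhd isOpen_ball).mono (closedBall_subset_ball hR)
  have hanr : AnalyticOnNhd ℂ u (closedBall 0 r) :=
    hanR.mono (closedBall_subset_closedBall (by rw [habsR]; exact hrR.le))
  have hzeros : {z : ℂ | ‖z‖ < r ∧ u z = 0} ⊆ (divisor u (closedBall 0 r)).support :=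
    fun z ⟨hz, huz⟩ ↦ hanr.mem_support_divisor (convex_closedBall 0 r).isPreconnected
      (mem_closedBall_self hr.le) (by simp [hu0]) (by simpa using hz.le) huz
  have jensen := hanR.sum_divisor_le (r := r) (abs_pos.mpr hr.ne') (by rwa [habsR, abs_of_pos hr])
    (Real.one_le_exp hlam) (by simp [hu0]) fun z hz ↦ hbd z <|
      closedBall_subset_closedBall (by rw [habsR]; exact hR.le) (sphere_subset_closedBall hz)
  rw [hu0, norm_one, div_one, Real.log_exp, abs_of_pos hr] at jensen
  have hfin := ((divisor u (closedBall 0 r)).finiteSupport (isCompact_closedBall 0 r)).subset hzeros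
  refine ⟨hfin, le_trans ?_ jensen⟩
  exact_mod_cast hanr.sum_zeroMultiplicity_le_finsum_divisor (isCompact_closedBall 0 r)
    (by rwa [Set.Finite.coe_toFinset])

/-- **Counting zeros of a bounded holomorphic function.**
If `u` is continuous on the closed unit disc, holomorphic on the open unit disc,
`u 0 = 1`, and `|u| ≤ exp λ` on the closed unit disc, then for `0 < r < R < 1` the number of
zeros of `u` in `{|z| < r}`, counted with multiplicity, is at most `λ / log (R / r)`. -/
theorem count_zeros_le_of_bounded (lam : ℝ) (hlam : 0 ≤ lam) (u : ℂ → ℂ)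
    (hcont : ContinuousOn u (closedBall (0 : ℂ) 1))
    (hhol : DifferentiableOn ℂ u (ball (0 : ℂ) 1))
    (hu0 : u 0 = 1)
    (hbd : ∀ z ∈ closedBall (0 : ℂ) 1, ‖u z‖ ≤ Real.exp lam)
    (r R : ℝ) (hr : 0 < r) (hrR : r < R) (hR : R < 1) :
    ∃ hfin : {z : ℂ | ‖z‖ < r ∧ u z = 0}.Finite,
      ((∑ z ∈ hfin.toFinset, zeroMultiplicity u z : ℕ) : ℝ) ≤ lam / Real.log (R / r) :=
  count_zeros_le_of_bounded_general lam hlam u hhol hu0 hbd r R hr hrR hR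
end

section
/- Let 0 < r < R < 1 and let z₁, …, z_n ∈ ℂ satisfy |z_j| ≤ R for all j. Then there exists a real number R' ∈ ((r+R)/2, R) such that for every z ∈ ℂ with |z| = R', ∏_{j=1}^{n} |z − z_j| ≥ exp(−4n/(R − r)). -/
/-!
Put `a j = ‖z j‖`. If `‖w‖ = t` then `|t - a j| ≤ ‖w - z j‖`, so it suffices to find
`t ∈ ((r + R) / 2, R)`, outside the null set `{a j}`, with `∑ j, log |t - a j| ≥ -4n/(R - r)`.
Such a `t` exists because the sum is at least its average over that interval, of length `L`, and
the average of each `log |t - a|` over it is at least `log (L / 2) - 1 ≥ -2 / L`, the worst case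
being `a` at the midpoint.
-/

open MeasureTheory Set Real

theorem integral_log_abs_sub (a u v : ℝ) :
    ∫ t in u..v, log |t - a| = (v - a) * log (v - a) - (u - a) * log (u - a) - (v - u) := by
  simp_rw [log_abs]
  rw [intervalIntegral.integral_comp_sub_right (fun x => log x), integral_log]
  ring

theorem intervalIntegrable_log_abs_sub (a u v : ℝ) :
    IntervalIntegrable (fun t => log |t - a|) volume u v := by
  simpa only [log_abs, sub_add_cancel] using
    (intervalIntegral.intervalIntegrable_log' (a := u - a) (b := v - a)).comp_sub_right a

theorem mul_log_add_div_two_le {p q : ℝ} (hp : 0 ≤ p) (hq : 0 ≤ q) :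
    (p + q) * log ((p + q) / 2) ≤ p * log p + q * log q := by
  have := convexOn_mul_log.2 (mem_Ici.2 hp) (mem_Ici.2 hq)
    (by norm_num : (0 : ℝ) ≤ 1 / 2) (by norm_num : (0 : ℝ) ≤ 1 / 2) (by norm_num)
  simp only [smul_eq_mul] at this
  rw [show 1 / 2 * p + 1 / 2 * q = (p + q) / 2 by ring] at this
  linarith

theorem sub_mul_log_div_two_le_of_nonneg {p q : ℝ} (hp : 0 ≤ p) (hpq : p ≤ q) :
    (q - p) * log ((q - p) / 2) ≤ q * log q - p * log p := by
  rcases hp.eq_or_lt with rfl | hp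
  · rcases hpq.eq_or_lt with rfl | hq
    · simp
    · simp only [sub_zero, zero_mul]
      gcongr
      linarith
  have hlog : log p ≤ log q := log_le_log hp hpq
  rcases hpq.eq_or_lt with rfl | hpq
  · simp
  have : log ((q - p) / 2) ≤ log q := log_le_log (by linarith) (by linarith)
  nlinarith

/-- As `log (-x) = log x`, `x ↦ x * log x` is odd: this reduces to `0 ≤ p`, or to convexity
when `p ≤ 0 ≤ q`. -/
theorem sub_mul_log_div_two_le {p q : ℝ} (hpq : p ≤ q) :
    (q - p) * log ((q - p) / 2) ≤ q * log q - p * log p := by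
  rcases le_total 0 p with hp | hp
  · exact sub_mul_log_div_two_le_of_nonneg hp hpq
  rcases le_total q 0 with hq | hq
  · have := sub_mul_log_div_two_le_of_nonneg (neg_nonneg.2 hq) (neg_le_neg hpq)
    rw [log_neg_eq_log, log_neg_eq_log, show -p - -q = q - p by ring] at this
    linarith
  · have := mul_log_add_div_two_le (neg_nonneg.2 hp) hq
    rw [log_neg_eq_log, show -p + q = q - p by ring] at this
    linarith

theorem integral_log_abs_sub_ge (a : ℝ) {u v : ℝ} (huv : u ≤ v) :
    (v - u) * (log ((v - u) / 2) - 1) ≤ ∫ t in u..v, log |t - a| := by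
  have := sub_mul_log_div_two_le (sub_le_sub_right huv a)
  rw [integral_log_abs_sub, sub_sub_sub_cancel_right] at *
  linarith

theorem exists_mem_Ioo_notMem_average_le {f : ℝ → ℝ} {c d : ℝ} (hcd : c < d)
    (hf : IntervalIntegrable f volume c d) {S : Set ℝ} (hS : volume S = 0) :
    ∃ t ∈ Ioo c d, t ∉ S ∧ ⨍ x in c..d, f x ≤ f t := by
  rw [uIoc_of_le hcd.le, setAverage_congr Ioo_ae_eq_Ioc.symm]
  have hμ : volume.restrict (Ioo c d) ≠ 0 := by simp [hcd]
  have hN : volume.restrict (Ioo c d) ((Ioo c d)ᶜ ∪ S) = 0 :=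
    measure_union_null (ae_iff.1 (ae_restrict_mem measurableSet_Ioo))
      (Measure.absolutelyContinuous_of_le Measure.restrict_le_self hS)
  obtain ⟨t, ht, hle⟩ := exists_notMem_null_average_le hμ (hf.1.mono_set Ioo_subset_Ioc_self) hN
  rw [mem_union, not_or, notMem_compl_iff] at ht
  exact ⟨t, ht.1, ht.2, hle⟩

theorem exists_mem_Ioo_exp_le_prod_abs_sub {ι : Type*} [Fintype ι] (a : ι → ℝ) {c d : ℝ}
    (hcd : c < d) :
    ∃ t ∈ Ioo c d, exp (Fintype.card ι * (log ((d - c) / 2) - 1)) ≤ ∏ j, |t - a j| := by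
  have hf : IntervalIntegrable (fun t => ∑ j, log |t - a j|) volume c d := by
    simpa only [Finset.sum_fn] using
      IntervalIntegrable.sum Finset.univ fun j _ => intervalIntegrable_log_abs_sub (a j) c d
  have havg : Fintype.card ι * (log ((d - c) / 2) - 1) ≤ ⨍ t in c..d, ∑ j, log |t - a j| := by
    rw [interval_average_eq_div, le_div_iff₀ (sub_pos.2 hcd),
      intervalIntegral.integral_finsetSum fun j _ => intervalIntegrable_log_abs_sub (a j) c d]
    calc _ = ∑ _j : ι, (d - c) * (log ((d - c) / 2) - 1) := by
          rw [Finset.sum_const, Finset.card_univ, nsmul_eq_mul]; ring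
      _ ≤ _ := Finset.sum_le_sum fun j _ => integral_log_abs_sub_ge (a j) hcd.le
  obtain ⟨t, ht, hta, hle⟩ :=
    exists_mem_Ioo_notMem_average_le hcd hf ((countable_range a).measure_zero volume)
  refine ⟨t, ht, ?_⟩
  have hpos : ∀ j, 0 < |t - a j| := fun j => abs_pos.2 (sub_ne_zero.2 fun h => hta ⟨j, h.symm⟩)
  calc _ ≤ exp (∑ j, log |t - a j|) := exp_le_exp.2 (havg.trans hle)
    _ = ∏ j, |t - a j| := by
      rw [exp_sum]
      exact Finset.prod_congr rfl fun j _ => exp_log (hpos j)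

theorem exists_radius_prod_dist_ge_general (r R : ℝ) (hrR : r < R)
    (n : ℕ) (z : Fin n → ℂ) :
    ∃ R' ∈ Set.Ioo ((r + R) / 2) R, ∀ w : ℂ, ‖w‖ = R' →
      Real.exp (-(4 * n) / (R - r)) ≤ ∏ j, ‖w - z j‖ := by
  obtain ⟨t, ht, hprod⟩ :=
    exists_mem_Ioo_exp_le_prod_abs_sub (fun j => ‖z j‖) (by linarith : (r + R) / 2 < R)
  rw [Fintype.card_fin, show (R - (r + R) / 2) / 2 = (R - r) / 4 by ring] at hprod
  refine ⟨t, ht, fun w hw => ?_⟩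
  have hlog : -4 / (R - r) ≤ log ((R - r) / 4) - 1 := by
    have := one_sub_inv_le_log_of_pos (x := (R - r) / 4) (by linarith)
    rw [inv_div] at this
    rw [neg_div]
    linarith
  calc exp (-(4 * n) / (R - r)) = exp (n * (-4 / (R - r))) := by ring_nf
    _ ≤ exp (n * (log ((R - r) / 4) - 1)) := by gcongr
    _ ≤ ∏ j, |t - ‖z j‖| := hprod
    _ ≤ ∏ j, ‖w - z j‖ := Finset.prod_le_prod (fun _ _ => abs_nonneg _) fun j _ =>
      hw ▸ abs_norm_sub_norm_le w (z j)

/-- Given `0 < r < R < 1` and points `z₁, …, z_n` in the closed disc of radius `R`, there is a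
radius `R' ∈ ((r+R)/2, R)` such that for every `z` with `|z| = R'`,
`∏_j |z - z_j| ≥ exp (-4n/(R-r))`. -/
theorem exists_radius_prod_dist_ge (r R : ℝ) (hr : 0 < r) (hrR : r < R) (hR : R < 1)
    (n : ℕ) (z : Fin n → ℂ) (hz : ∀ j, ‖z j‖ ≤ R) :
    ∃ R' ∈ Set.Ioo ((r + R) / 2) R, ∀ w : ℂ, ‖w‖ = R' →
      Real.exp (-(4 * n) / (R - r)) ≤ ∏ j, ‖w - z j‖ :=
  exists_radius_prod_dist_ge_general r R hrR n z
end

section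
/- Let d ≥ 1 be an integer, A > 0, and ε ∈ (0, d). Then there exists h₀ ∈ (0, e^{−e}) such that for every h ∈ (0, h₀] and every real number F > 1 satisfying F^d · log F = A · log(1/h), one has (d − ε)·A ≤ F^d · (log log(1/h)) / (log(1/h)) ≤ (d + 2ε)·A. -/
/-!
Put `t = log F` and `L = log (1/h)`. Taking logarithms in `F ^ d * t = A * L` gives
`log L = d * t + (log t - log A)`, and `F ^ d * log L / L = A * log L / t`. As `h → 0` we have
`L → ∞`, which forces `t → ∞`, and then `|log t - log A| ≤ ε * t` because the logarithm is `o(t)`.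
Hence `(d - ε) * t ≤ log L ≤ (d + ε) * t`, which is the claim after multiplying by `A / t`.
-/

open Real Filter

lemma log_eq_of_pow_mul_log_eq {d : ℕ} {A F L : ℝ} (hA : 0 < A) (hF : 1 < F)
    (h : F ^ d * log F = A * L) :
    log L = d * log F + (log (log F) - log A) := by
  have hlogF : 0 < log F := log_pos hF
  have hFd : 0 < F ^ d := pow_pos (by linarith) d
  have hL : L = F ^ d * log F / A := by
    rw [h, mul_div_cancel_left₀ L hA.ne']
  rw [hL, log_div (by positivity) hA.ne', log_mul hFd.ne' hlogF.ne', log_pow]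
  ring

lemma eventually_abs_log_sub_le_mul (a : ℝ) {c : ℝ} (hc : 0 < c) :
    ∀ᶠ t in atTop, |log t - a| ≤ c * t := by
  filter_upwards [(isLittleO_log_id_atTop.sub (Asymptotics.isLittleO_const_id_atTop a)).def hc,
    eventually_ge_atTop 0] with t ht ht0
  simpa [Real.norm_eq_abs, abs_of_nonneg ht0] using ht

lemma pow_mul_log_lt_pow_mul_log {x y : ℝ} (d : ℕ) (hx : 1 ≤ x) (hxy : x < y) :
    x ^ d * log x < y ^ d * log y := by
  have hx0 : 0 < x := by linarith
  calc x ^ d * log x ≤ y ^ d * log x :=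
        mul_le_mul_of_nonneg_right (pow_le_pow_left₀ hx0.le hxy.le d) (log_nonneg hx)
    _ < y ^ d * log y :=
        mul_lt_mul_of_pos_left (log_lt_log hx0 hxy) (pow_pos (hx0.trans hxy) d)

lemma eventually_abs_log_sub_le_of_pow_mul_log_eq (d : ℕ) {A ε : ℝ} (hA : 0 < A) (hε : 0 < ε) :
    ∀ᶠ L in atTop, ∀ F : ℝ, 1 < F → F ^ d * log F = A * L →
      |log L - d * log F| ≤ ε * log F := by
  obtain ⟨T, hT⟩ := eventually_atTop.1 (eventually_abs_log_sub_le_mul (log A) hε)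
  filter_upwards [eventually_ge_atTop (exp T ^ d * T / A)] with L hL F hF h
  have hTF : T ≤ log F := by
    by_contra! hFT
    have hlt := pow_mul_log_lt_pow_mul_log d hF.le ((log_lt_iff_lt_exp (by linarith)).1 hFT)
    rw [log_exp, h] at hlt
    have := (div_le_iff₀ hA).1 hL
    linarith
  rw [log_eq_of_pow_mul_log_eq hA hF h, add_sub_cancel_left]
  exact hT _ hTF

lemma le_log_one_div_of_le_exp_neg {h L : ℝ} (hh : 0 < h) (hL : h ≤ exp (-L)) :
    L ≤ log (1 / h) := by
  rw [one_div, log_inv, le_neg]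
  simpa using log_le_log hh hL

theorem pow_mul_log_solution_asymptotics_general (d : ℕ) (A : ℝ) (hA : 0 < A)
    (ε : ℝ) (hε : 0 < ε) :
    ∃ h₀ ∈ Set.Ioo (0 : ℝ) (Real.exp (-Real.exp 1)), ∀ h ∈ Set.Ioc (0 : ℝ) h₀,
      ∀ F : ℝ, 1 < F → F ^ d * Real.log F = A * Real.log (1 / h) →
        ((d : ℝ) - ε) * A ≤ F ^ d * Real.log (Real.log (1 / h)) / Real.log (1 / h) ∧
        F ^ d * Real.log (Real.log (1 / h)) / Real.log (1 / h) ≤ ((d : ℝ) + 2 * ε) * A := by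
  obtain ⟨L₀, hL₀⟩ := eventually_atTop.1 (eventually_abs_log_sub_le_of_pow_mul_log_eq d hA hε)
  refine ⟨exp (-max L₀ (exp 1 + 1)), ⟨exp_pos _, exp_lt_exp.2 (by simp)⟩, ?_⟩
  rintro h ⟨hh, hh₀⟩ F hF hFL
  have hL := le_log_one_div_of_le_exp_neg hh hh₀
  have hlogF : 0 < log F := log_pos hF
  have hL0 : 0 < log (1 / h) := by linarith [le_max_right L₀ (exp 1 + 1), exp_pos 1]
  have hbound := abs_le.1 (hL₀ _ (le_of_max_le_left hL) F hF hFL)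
  have hratio : F ^ d * log (log (1 / h)) / log (1 / h) = A * log (log (1 / h)) / log F := by
    rw [div_eq_div_iff hL0.ne' hlogF.ne', mul_right_comm, hFL]
    ring
  rw [hratio, le_div_iff₀ hlogF, div_le_iff₀ hlogF]
  constructor <;> nlinarith

/-- Let `d ≥ 1`, `A > 0` and `ε ∈ (0, d)`. Then there is `h₀ ∈ (0, e^{-e})` such that
for every `h ∈ (0, h₀]` and every `F > 1` with `F^d · log F = A · log (1/h)` one has
`(d - ε)·A ≤ F^d · log log (1/h) / log (1/h) ≤ (d + 2ε)·A`. -/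
theorem pow_mul_log_solution_asymptotics (d : ℕ) (hd : 1 ≤ d) (A : ℝ) (hA : 0 < A)
    (ε : ℝ) (hε : 0 < ε) (hεd : ε < d) :
    ∃ h₀ ∈ Set.Ioo (0 : ℝ) (Real.exp (-Real.exp 1)), ∀ h ∈ Set.Ioc (0 : ℝ) h₀,
      ∀ F : ℝ, 1 < F → F ^ d * Real.log F = A * Real.log (1 / h) →
        ((d : ℝ) - ε) * A ≤ F ^ d * Real.log (Real.log (1 / h)) / Real.log (1 / h) ∧
        F ^ d * Real.log (Real.log (1 / h)) / Real.log (1 / h) ≤ ((d : ℝ) + 2 * ε) * A :=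
  pow_mul_log_solution_asymptotics_general d A hA ε hε
end
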